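/- Let M^O = [[0, −1, 0], [1, 0, 0], [0, 0, 0]], M^L = [[√2, 0, 0], [0, 0, 0], [−√2, 0, 0]], M^R = [[−√2, 0, −√2], [0, 0, 0], [0, 0, 0]] be the 3×3 complex matrices defining the exact scar state |Φ₂⟩ of the PXP chain. Then for every n ≥ 2 and every Fibonacci-allowed cyclic word s : ZMod n → {O, L, R}, Σ_{k ∈ ZMod n} Tr(F^{s_k} · M^{s_{k+1}} ⋯ M^{s_{k+n−1}}) = 0. (Hence |Φ₂⟩ is an exact E = 0 eigenstate of the periodic PXP chain, proven directly without using its relation to |Φ₁⟩.) -/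

import Mathlib

open Matrix

/-- The blocked three-letter alphabet `{O, L, R}`. -/
inductive Blk | O | L | R
deriving DecidableEq

/-- The MPS tensors of the exact scar state `|Φ₂⟩` of the PXP chain. -/
noncomputable def MPhi2 : Blk → Matrix (Fin 3) (Fin 3) ℂ
  | .O => !![0, -1, 0; 1, 0, 0; 0, 0, 0]
  | .L => !![(Real.sqrt 2 : ℂ), 0, 0; 0, 0, 0; -(Real.sqrt 2 : ℂ), 0, 0]
  | .R => !![-(Real.sqrt 2 : ℂ), 0, -(Real.sqrt 2 : ℂ); 0, 0, 0; 0, 0, 0]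

/-- The defect matrices: `F^O = M^L + M^R`, `F^L = F^R = M^O`. -/
noncomputable def FPhi2 : Blk → Matrix (Fin 3) (Fin 3) ℂ
  | .O => MPhi2 .L + MPhi2 .R
  | .L => MPhi2 .O
  | .R => MPhi2 .O

/-!
Each insertion term telescopes. For every Fibonacci-allowed pair `(a, b)` the defect matrices
satisfy the local identity `F^a M^b = B^a M^b - M^a B^b`, where the matrices `B^a` solve this
linear system in their entries. Writing `P_k = M^{s_{k+1}} ⋯ M^{s_{k+n-1}}` and using cyclicity
of the trace, the `k`-th term becomes `Tr(B^{s_k} P_k) - Tr(B^{s_{k+1}} P_{k+1})`, and these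
differences cancel around the cycle.
-/

section SegmentProd

variable {M : Type*} [Monoid M] {n : ℕ}

def segmentProd (A : ZMod n → M) (k : ZMod n) (m : ℕ) : M :=
  (List.ofFn fun j : Fin m => A (k + (j : ℕ))).prod

theorem segmentProd_succ (A : ZMod n → M) (k : ZMod n) (m : ℕ) :
    segmentProd A k (m + 1) = A k * segmentProd A (k + 1) m := by
  simp only [segmentProd, List.ofFn_succ, List.prod_cons, Fin.val_zero, Fin.val_succ,
    Nat.cast_zero, add_zero, Nat.cast_succ, add_assoc, add_comm (1 : ZMod n)]

theorem segmentProd_succ' (A : ZMod n → M) (k : ZMod n) (m : ℕ) :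
    segmentProd A k (m + 1) = segmentProd A k m * A (k + m) := by
  simp only [segmentProd, List.ofFn_succ', List.prod_concat, Fin.val_castSucc, Fin.val_last]

end SegmentProd

theorem Fintype.sum_sub_comp_add_right_eq_zero {G R : Type*} [AddGroup G] [Fintype G]
    [AddCommGroup R] (f : G → R) (g : G) : ∑ k, (f k - f (k + g)) = 0 := by
  rw [Finset.sum_sub_distrib, sub_eq_zero]
  exact (Equiv.sum_comp (Equiv.addRight g) f).symm

theorem sum_trace_mul_segmentProd_eq_zero {R ι : Type*} [CommRing R] [Fintype ι]
    [DecidableEq ι] {n : ℕ} [NeZero n] (hn : 2 ≤ n) (A F B : ZMod n → Matrix ι ι R)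
    (h : ∀ k, F k * A (k + 1) = B k * A (k + 1) - A k * B (k + 1)) :
    ∑ k, trace (F k * segmentProd A (k + 1) (n - 1)) = 0 := by
  obtain ⟨m, rfl⟩ : ∃ m, n = m + 2 := ⟨n - 2, by omega⟩
  set P := fun k => segmentProd A (k + 1) (m + 1)
  have hwrap : ∀ k : ZMod (m + 2), k + 1 + 1 + m = k := by
    intro k
    have hchar : ((m + 2 : ℕ) : ZMod (m + 2)) = 0 := ZMod.natCast_self _
    push_cast at hchar
    linear_combination hchar
  have hterm : ∀ k, trace (F k * P k) = trace (B k * P k) - trace (B (k + 1) * P (k + 1)) := by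
    intro k
    have hleft : P k = A (k + 1) * segmentProd A (k + 1 + 1) m := segmentProd_succ ..
    have hright : P (k + 1) = segmentProd A (k + 1 + 1) m * A k := by
      rw [show P (k + 1) = _ from segmentProd_succ' .., hwrap]
    rw [hleft, hright, ← mul_assoc, h, sub_mul, trace_sub, mul_assoc, mul_assoc,
      trace_mul_comm (A k), mul_assoc]
  show ∑ k, trace (F k * P k) = 0
  simpa only [hterm] using Fintype.sum_sub_comp_add_right_eq_zero (fun k => trace (B k * P k)) 1

noncomputable def BPhi2 : Blk → Matrix (Fin 3) (Fin 3) ℂ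
  | .O => !![(Real.sqrt 2 : ℂ) / 2, 0, 0; 0, (Real.sqrt 2 : ℂ) / 2, 0; -(Real.sqrt 2 : ℂ), 0, 0]
  | .L => !![0, 0, 0; 1, 0, 0; 0, -1, 0]
  | .R => !![0, 0, 0; 1, 0, 1; 0, 0, 0]

theorem FPhi2_mul_MPhi2 {a b : Blk} (hab : ¬(a = .R ∧ b = .L)) :
    FPhi2 a * MPhi2 b = BPhi2 a * MPhi2 b - MPhi2 a * BPhi2 b := by
  have hsqrt : (Real.sqrt 2 : ℂ) * Real.sqrt 2 = 2 := by
    rw [← Complex.ofReal_mul, Real.mul_self_sqrt zero_le_two, Complex.ofReal_ofNat]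
  cases a <;> cases b
  case R.L => exact absurd ⟨rfl, rfl⟩ hab
  all_goals
    ext i j
    fin_cases i <;> fin_cases j <;>
      simp [FPhi2, MPhi2, BPhi2, mul_apply, Fin.sum_univ_three] <;>
      first | linear_combination hsqrt / 2 | linear_combination -hsqrt / 2

/-- for the `|Φ₂⟩` MPS tensors, the cyclic insertion sum
vanishes on every Fibonacci-allowed cyclic word, hence `|Φ₂⟩` is an exact
`E = 0` eigenstate of the periodic PXP chain. -/
theorem Phi2_cyclic_insertion_sum_eq_zero
    (n : ℕ) [NeZero n] (hn : 2 ≤ n)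
    (s : ZMod n → Blk)
    (hfib : ¬ ∃ k : ZMod n, s k = Blk.R ∧ s (k + 1) = Blk.L) :
    ∑ k : ZMod n,
      Matrix.trace (FPhi2 (s k) *
        (List.ofFn fun j : Fin (n - 1) =>
          MPhi2 (s (k + 1 + ((j : ℕ) : ZMod n)))).prod) = 0 :=
  sum_trace_mul_segmentProd_eq_zero hn (fun k => MPhi2 (s k)) (fun k => FPhi2 (s k))
    (fun k => BPhi2 (s k)) fun k => FPhi2_mul_MPhi2 fun hk => hfib ⟨k, hk⟩
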